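/- Let n ≥ 2 and let A be a signed graph on n vertices whose underlying graph is the path P_n, i.e. there is a bijection g of Fin n such that |A(g i, g j)| = 1 iff i and j differ by exactly 1. Then the exterior power ∧^k A is balanced for every integer k with 1 ≤ k ≤ n−1. -/

import Mathlib

open Matrix Finset

def IsSignedMatrix {ι : Type*} (B : Matrix ι ι ℝ) : Prop :=
  B.IsSymm ∧ (∀ i, B i i = 0) ∧ ∀ i j, B i j = -1 ∨ B i j = 0 ∨ B i j = 1

def IsBalancedMatrix {ι : Type*} [Fintype ι] (B : Matrix ι ι ℝ) : Prop :=
  ∃ D : Matrix ι ι ℝ, D.IsDiag ∧ (∀ i, D i i = 1 ∨ D i i = -1) ∧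
    D * B * D = Matrix.of fun i j => |B i j|

def cartPow {n : ℕ} (A : Matrix (Fin n) (Fin n) ℝ) (k : ℕ) :
    Matrix (Fin k → Fin n) (Fin k → Fin n) ℝ :=
  Matrix.of fun u v => ∑ i : Fin k, A (u i) (v i) *
    ∏ j ∈ Finset.univ.erase i, (if u j = v j then (1 : ℝ) else 0)

noncomputable def enumOf {n k : ℕ} (r : LinearOrder (Fin n)) (S : Finset (Fin n))
    (h : S.card = k) : Fin k → Fin n :=
  fun i => ((@Finset.orderIsoOfFin (Fin n) r S k h) i : Fin n)

noncomputable def altOf {n : ℕ} (k : ℕ) (r : LinearOrder (Fin n)) :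
    Matrix (Fin k → Fin n) {S : Finset (Fin n) // S.card = k} ℝ :=
  Matrix.of fun u S =>
    (Real.sqrt (Nat.factorial k))⁻¹ *
      ∑ π : Equiv.Perm (Fin k),
        if u = enumOf r S.1 S.2 ∘ π then ((Equiv.Perm.sign π : ℤ) : ℝ) else 0

noncomputable def alt (n k : ℕ) :
    Matrix (Fin k → Fin n) {S : Finset (Fin n) // S.card = k} ℝ :=
  altOf k inferInstance

noncomputable def extPow {n : ℕ} (A : Matrix (Fin n) (Fin n) ℝ) (k : ℕ) :
    Matrix {S : Finset (Fin n) // S.card = k} {S : Finset (Fin n) // S.card = k} ℝ :=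
  (alt n k)ᵀ * cartPow A k * alt n k

def IsPathMatrix {n : ℕ} (A : Matrix (Fin n) (Fin n) ℝ) : Prop :=
  ∃ g : Equiv.Perm (Fin n), ∀ i j : Fin n,
    |A (g i) (g j)| = 1 ↔ ((i : ℤ) - j = 1 ∨ (j : ℤ) - i = 1)

def IsCycleMatrix {n : ℕ} (A : Matrix (Fin n) (Fin n) ℝ) : Prop :=
  3 ≤ n ∧ ∃ g : Equiv.Perm (Fin n), ∀ i j : Fin n,
    |A (g i) (g j)| = 1 ↔
      ((i : ℤ) - j ≡ 1 [ZMOD (n : ℤ)] ∨ (i : ℤ) - j ≡ -1 [ZMOD (n : ℤ)])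

def signedAdjGraph {n : ℕ} (A : Matrix (Fin n) (Fin n) ℝ) : SimpleGraph (Fin n) :=
  SimpleGraph.fromRel (fun u v => |A u v| = 1)

-- helper lemmas about enumOf

lemma enumOf_mem {n k : ℕ} (r : LinearOrder (Fin n)) (S : Finset (Fin n)) (h : S.card = k)
    (i : Fin k) : enumOf r S h i ∈ S :=
  ((@Finset.orderIsoOfFin (Fin n) r S k h).toEquiv i).2

lemma enumOf_injective {n k : ℕ} (r : LinearOrder (Fin n)) (S : Finset (Fin n)) (h : S.card = k) :
    Function.Injective (enumOf r S h) := fun i j hij =>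
  (@Finset.orderIsoOfFin (Fin n) r S k h).toEquiv.injective (Subtype.ext hij)

lemma enumOf_surj {n k : ℕ} (r : LinearOrder (Fin n)) (S : Finset (Fin n)) (h : S.card = k)
    {x : Fin n} (hx : x ∈ S) : ∃ i, enumOf r S h i = x :=
  ⟨(@Finset.orderIsoOfFin (Fin n) r S k h).toEquiv.symm ⟨x, hx⟩,
    congrArg Subtype.val ((@Finset.orderIsoOfFin (Fin n) r S k h).toEquiv.apply_symm_apply ⟨x, hx⟩)⟩

-- key sum helper
lemma sum_alt {n k : ℕ} (S : {S : Finset (Fin n) // S.card = k}) (F : (Fin k → Fin n) → ℝ) :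
    ∑ u : Fin k → Fin n, alt n k u S * F u =
      (Real.sqrt (Nat.factorial k))⁻¹ *
        ∑ π : Equiv.Perm (Fin k), ((Equiv.Perm.sign π : ℤ) : ℝ) *
          F (enumOf inferInstance S.1 S.2 ∘ π) := by
  unfold alt altOf
  simp only [Matrix.of_apply]
  calc ∑ u : Fin k → Fin n,
        ((Real.sqrt (Nat.factorial k))⁻¹ *
          ∑ π : Equiv.Perm (Fin k),
            if u = enumOf inferInstance S.1 S.2 ∘ π then ((Equiv.Perm.sign π : ℤ) : ℝ) else 0) * F u
      = ∑ u : Fin k → Fin n, ∑ π : Equiv.Perm (Fin k),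
          (Real.sqrt (Nat.factorial k))⁻¹ *
            (if u = enumOf inferInstance S.1 S.2 ∘ π then ((Equiv.Perm.sign π : ℤ) : ℝ) * F u else 0) := by
        apply Finset.sum_congr rfl; intro u _
        rw [mul_assoc, Finset.sum_mul, Finset.mul_sum]
        apply Finset.sum_congr rfl; intro π _
        rw [ite_mul, zero_mul]
    _ = ∑ π : Equiv.Perm (Fin k), ∑ u : Fin k → Fin n,
          (Real.sqrt (Nat.factorial k))⁻¹ *
            (if u = enumOf inferInstance S.1 S.2 ∘ π then ((Equiv.Perm.sign π : ℤ) : ℝ) * F u else 0) :=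
        Finset.sum_comm
    _ = _ := by
        rw [Finset.mul_sum]
        apply Finset.sum_congr rfl; intro π _
        rw [← Finset.mul_sum]
        congr 1
        exact Finset.sum_ite_eq' Finset.univ _ _ |>.trans (by simp)

section Formula
variable {n k : ℕ} (A : Matrix (Fin n) (Fin n) ℝ)

lemma sign_mul_cast (π ρ : Equiv.Perm (Fin k)) :
    ((Equiv.Perm.sign π : ℤ) : ℝ) * ((Equiv.Perm.sign (ρ * π) : ℤ) : ℝ)
      = ((Equiv.Perm.sign ρ : ℤ) : ℝ) := by
  rw [Equiv.Perm.sign_mul]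
  rcases Int.units_eq_one_or (Equiv.Perm.sign π) with h | h <;>
    rcases Int.units_eq_one_or (Equiv.Perm.sign ρ) with h' | h' <;>
      simp [h, h']

lemma stepC (S T : {S : Finset (Fin n) // S.card = k}) (π : Equiv.Perm (Fin k)) :
    ∑ σ : Equiv.Perm (Fin k), ((Equiv.Perm.sign π : ℤ) : ℝ) * (((Equiv.Perm.sign σ : ℤ) : ℝ) *
        cartPow A k (enumOf inferInstance S.1 S.2 ∘ π) (enumOf inferInstance T.1 T.2 ∘ σ))
      = ∑ ρ : Equiv.Perm (Fin k), ∑ m : Fin k,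
          ((Equiv.Perm.sign ρ : ℤ) : ℝ) *
            A (enumOf inferInstance S.1 S.2 m) (enumOf inferInstance T.1 T.2 (ρ m)) *
            ∏ j ∈ Finset.univ.erase m,
              (if enumOf inferInstance S.1 S.2 j = enumOf inferInstance T.1 T.2 (ρ j) then (1:ℝ) else 0) := by
  rw [← Equiv.sum_comp (Equiv.mulRight π)
    (fun σ => ((Equiv.Perm.sign π : ℤ) : ℝ) * (((Equiv.Perm.sign σ : ℤ) : ℝ) *
        cartPow A k (enumOf inferInstance S.1 S.2 ∘ π) (enumOf inferInstance T.1 T.2 ∘ σ)))]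
  apply Finset.sum_congr rfl
  intro ρ _
  simp only [Equiv.coe_mulRight]
  rw [← mul_assoc, sign_mul_cast π ρ]
  unfold cartPow
  simp only [Matrix.of_apply]
  rw [Finset.mul_sum]
  simp only [Function.comp]
  rw [← Equiv.sum_comp π.symm (fun i => ((Equiv.Perm.sign ρ : ℤ) : ℝ) *
      (A (enumOf inferInstance S.1 S.2 (π i)) (enumOf inferInstance T.1 T.2 ((ρ * π) i)) *
        ∏ j ∈ Finset.univ.erase i,
          (if enumOf inferInstance S.1 S.2 (π j) = enumOf inferInstance T.1 T.2 ((ρ * π) j) then (1:ℝ) else 0)))]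
  apply Finset.sum_congr rfl
  intro m _
  rw [← mul_assoc]
  congr 1
  · simp [Equiv.Perm.mul_apply]
  · apply Finset.prod_bij' (fun j _ => π j) (fun j _ => π.symm j)
    · intro j hj
      simp only [Finset.mem_erase, Finset.mem_univ, and_true] at hj ⊢
      exact fun hc => hj ((Equiv.eq_symm_apply π).mpr hc)
    · intro j hj
      simp only [Finset.mem_erase, Finset.mem_univ, and_true] at hj ⊢
      exact fun hc => hj (π.symm.injective hc)
    · intro j _; simp
    · intro j _; simp
    · intro j _
      simp [Equiv.Perm.mul_apply]
      exact if_congr Iff.rfl rfl rfl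

lemma extPow_apply (S T : {S : Finset (Fin n) // S.card = k}) :
    extPow A k S T = ∑ ρ : Equiv.Perm (Fin k), ∑ m : Fin k,
      ((Equiv.Perm.sign ρ : ℤ) : ℝ) *
        A (enumOf inferInstance S.1 S.2 m) (enumOf inferInstance T.1 T.2 (ρ m)) *
        ∏ j ∈ Finset.univ.erase m,
          (if enumOf inferInstance S.1 S.2 j = enumOf inferInstance T.1 T.2 (ρ j) then (1:ℝ) else 0) := by
  have h1 : extPow A k S T = ∑ v : Fin k → Fin n, alt n k v T *
      ∑ u : Fin k → Fin n, alt n k u S * cartPow A k u v := by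
    unfold extPow
    rw [Matrix.mul_apply]
    simp only [Matrix.mul_apply, Matrix.transpose_apply]
    exact Finset.sum_congr rfl fun v _ => mul_comm _ _
  rw [h1, sum_alt]
  have h2 : ∀ σ : Equiv.Perm (Fin k),
      (∑ u : Fin k → Fin n, alt n k u S * cartPow A k u (enumOf inferInstance T.1 T.2 ∘ σ)) =
        (Real.sqrt (Nat.factorial k))⁻¹ *
          ∑ π : Equiv.Perm (Fin k), ((Equiv.Perm.sign π : ℤ) : ℝ) *
            cartPow A k (enumOf inferInstance S.1 S.2 ∘ π) (enumOf inferInstance T.1 T.2 ∘ σ) :=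
    fun σ => sum_alt S _
  simp only [h2]
  have hfac : ((Nat.factorial k : ℝ)) ≠ 0 := Nat.cast_ne_zero.mpr (Nat.factorial_ne_zero k)
  have hsq : (Real.sqrt (Nat.factorial k))⁻¹ * (Real.sqrt (Nat.factorial k))⁻¹
      = ((Nat.factorial k : ℝ))⁻¹ := by
    rw [← mul_inv]
    rw [Real.mul_self_sqrt (by positivity)]
  calc (Real.sqrt (Nat.factorial k))⁻¹ * ∑ σ : Equiv.Perm (Fin k),
        ((Equiv.Perm.sign σ : ℤ) : ℝ) * ((Real.sqrt (Nat.factorial k))⁻¹ *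
          ∑ π : Equiv.Perm (Fin k), ((Equiv.Perm.sign π : ℤ) : ℝ) *
            cartPow A k (enumOf inferInstance S.1 S.2 ∘ π) (enumOf inferInstance T.1 T.2 ∘ σ))
      = ((Nat.factorial k : ℝ))⁻¹ * ∑ π : Equiv.Perm (Fin k), ∑ σ : Equiv.Perm (Fin k),
          ((Equiv.Perm.sign π : ℤ) : ℝ) * (((Equiv.Perm.sign σ : ℤ) : ℝ) *
            cartPow A k (enumOf inferInstance S.1 S.2 ∘ π) (enumOf inferInstance T.1 T.2 ∘ σ)) := by
        have e1 : ∀ c : ℝ, ∀ X : Equiv.Perm (Fin k) → Equiv.Perm (Fin k) → ℝ,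
            c * (∑ σ : Equiv.Perm (Fin k), ((Equiv.Perm.sign σ : ℤ) : ℝ) * (c * ∑ π : Equiv.Perm (Fin k), ((Equiv.Perm.sign π : ℤ) : ℝ) * X π σ))
              = ∑ σ : Equiv.Perm (Fin k), ∑ π : Equiv.Perm (Fin k), (c * c) * (((Equiv.Perm.sign π : ℤ) : ℝ) * (((Equiv.Perm.sign σ : ℤ) : ℝ) * X π σ)) := by
          intro c X
          rw [Finset.mul_sum]
          refine Finset.sum_congr rfl fun σ _ => ?_
          rw [Finset.mul_sum, Finset.mul_sum, Finset.mul_sum]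
          exact Finset.sum_congr rfl fun π _ => by ring
        rw [e1]
        rw [Finset.sum_comm, hsq, Finset.mul_sum]
        refine Finset.sum_congr rfl fun π _ => ?_
        rw [Finset.mul_sum]
    _ = ((Nat.factorial k : ℝ))⁻¹ * ∑ _π : Equiv.Perm (Fin k),
          ∑ ρ : Equiv.Perm (Fin k), ∑ m : Fin k,
            ((Equiv.Perm.sign ρ : ℤ) : ℝ) *
              A (enumOf inferInstance S.1 S.2 m) (enumOf inferInstance T.1 T.2 (ρ m)) *
              ∏ j ∈ Finset.univ.erase m,
                (if enumOf inferInstance S.1 S.2 j = enumOf inferInstance T.1 T.2 (ρ j) then (1:ℝ) else 0) := by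
        congr 1
        apply Finset.sum_congr rfl
        intro π _
        exact stepC A S T π
    _ = _ := by
        rw [Finset.sum_const, Finset.card_univ, Fintype.card_perm, Fintype.card_fin, nsmul_eq_mul, ← mul_assoc,
          inv_mul_cancel₀ hfac, one_mul]

end Formula

section Path

noncomputable def pOrd {n : ℕ} (g : Equiv.Perm (Fin n)) : LinearOrder (Fin n) :=
  LinearOrder.lift' (fun x => g.symm x) g.symm.injective

lemma pOrd_lt {n : ℕ} (g : Equiv.Perm (Fin n)) (x y : Fin n) :
    (pOrd g).lt x y ↔ g.symm x < g.symm y := Iff.rfl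

noncomputable def tauOf {n k : ℕ} (g : Equiv.Perm (Fin n)) (S : Finset (Fin n))
    (h : S.card = k) : Equiv.Perm (Fin k) :=
  ((@Finset.orderIsoOfFin (Fin n) (pOrd g) S k h).toEquiv).trans
    (@Finset.orderIsoOfFin (Fin n) inferInstance S k h).toEquiv.symm

lemma tau_spec {n k : ℕ} (g : Equiv.Perm (Fin n)) (S : Finset (Fin n)) (h : S.card = k)
    (j : Fin k) :
    enumOf inferInstance S h (tauOf g S h j) = enumOf (pOrd g) S h j := by
  simp only [enumOf, tauOf, Equiv.trans_apply]
  congr 1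
  exact (@Finset.orderIsoOfFin (Fin n) inferInstance S k h).toEquiv.apply_symm_apply _

lemma enum_replace {n k : ℕ} (g : Equiv.Perm (Fin n)) (s t : Fin n)
    (hab : ((g.symm s : Fin n) : ℤ) - ((g.symm t : Fin n) : ℤ) = 1 ∨
           ((g.symm t : Fin n) : ℤ) - ((g.symm s : Fin n) : ℤ) = 1)
    (S T : Finset (Fin n)) (hS : S.card = k) (hT : T.card = k)
    (hs : s ∈ S) (ht : t ∈ T) (hst : s ≠ t) (htS : t ∉ S)
    (hRE : S.erase s = T.erase t) :
    ∀ j, enumOf (pOrd g) T hT j =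
      if enumOf (pOrd g) S hS j = s then t else enumOf (pOrd g) S hS j := by
  intro j
  set q : Fin k → Fin n := fun j =>
    if enumOf (pOrd g) S hS j = s then t else enumOf (pOrd g) S hS j with hq
  have hmem : ∀ i, q i ∈ T := by
    intro i
    by_cases h : enumOf (pOrd g) S hS i = s
    · simp [hq, h, ht]
    · have : enumOf (pOrd g) S hS i ∈ S.erase s :=
        Finset.mem_erase.mpr ⟨h, enumOf_mem _ _ _ _⟩
      rw [hRE] at this
      simp [hq, h, Finset.mem_of_mem_erase this]
  -- key order fact
  have key : ∀ x : Fin n, x ∈ S → x ≠ s → x ≠ t →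
      ((g.symm s < g.symm x) ↔ (g.symm t < g.symm x)) := by
    intro x hx hxs hxt
    have h1 : g.symm x ≠ g.symm s := fun hc => hxs (g.symm.injective hc)
    have h2 : g.symm x ≠ g.symm t := fun hc => hxt (g.symm.injective hc)
    have h1' : ((g.symm x : Fin n) : ℤ) ≠ ((g.symm s : Fin n) : ℤ) := by
      exact_mod_cast fun hc => h1 (Fin.ext (by exact_mod_cast hc))
    have h2' : ((g.symm x : Fin n) : ℤ) ≠ ((g.symm t : Fin n) : ℤ) := by
      exact_mod_cast fun hc => h2 (Fin.ext (by exact_mod_cast hc))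
    constructor
    · intro h
      have h' : ((g.symm s : Fin n) : ℤ) < (g.symm x : Fin n) := by exact_mod_cast h
      have : ((g.symm t : Fin n) : ℤ) < (g.symm x : Fin n) := by omega
      exact_mod_cast this
    · intro h
      have h' : ((g.symm t : Fin n) : ℤ) < (g.symm x : Fin n) := by exact_mod_cast h
      have : ((g.symm s : Fin n) : ℤ) < (g.symm x : Fin n) := by omega
      exact_mod_cast this
  have key' : ∀ x : Fin n, x ∈ S → x ≠ s → x ≠ t →
      ((g.symm x < g.symm s) ↔ (g.symm x < g.symm t)) := by
    intro x hx hxs hxt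
    have h1 : g.symm x ≠ g.symm s := fun hc => hxs (g.symm.injective hc)
    have h2 : g.symm x ≠ g.symm t := fun hc => hxt (g.symm.injective hc)
    have := key x hx hxs hxt
    constructor
    · intro h
      rcases lt_trichotomy (g.symm x) (g.symm t) with h' | h' | h'
      · exact h'
      · exact absurd h' h2
      · exact absurd (this.mpr h') (not_lt.mpr (le_of_lt h))
    · intro h
      rcases lt_trichotomy (g.symm x) (g.symm s) with h' | h' | h'
      · exact h'
      · exact absurd h' h1
      · exact absurd (this.mp h') (not_lt.mpr (le_of_lt h))
  have hSenum : ∀ i, enumOf (pOrd g) S hS i = @Finset.orderEmbOfFin (Fin n) (pOrd g) S k hS i :=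
    fun i => @Finset.coe_orderIsoOfFin_apply (Fin n) (pOrd g) S k hS i
  have hSmono : ∀ i i' : Fin k, i < i' →
      g.symm (enumOf (pOrd g) S hS i) < g.symm (enumOf (pOrd g) S hS i') := by
    intro i i' hii
    have := @OrderEmbedding.strictMono (Fin k) (Fin n) _ (pOrd g).toPartialOrder.toPreorder
      (@Finset.orderEmbOfFin (Fin n) (pOrd g) S k hS) i i' hii
    rw [hSenum i, hSenum i']
    exact (pOrd_lt g _ _).mp this
  have hmono : ∀ i i' : Fin k, i < i' → (pOrd g).lt (q i) (q i') := by
    intro i i' hii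
    have hii' := hSmono i i' hii
    have hne : enumOf (pOrd g) S hS i ≠ enumOf (pOrd g) S hS i' :=
      fun hc => (ne_of_lt hii) (enumOf_injective _ _ _ hc)
    rw [pOrd_lt]
    by_cases h1 : enumOf (pOrd g) S hS i = s
    · by_cases h2 : enumOf (pOrd g) S hS i' = s
      · exact absurd (h1.trans h2.symm) hne
      · simp only [hq, h1, h2, if_true, if_false]
        have hxS : enumOf (pOrd g) S hS i' ∈ S := enumOf_mem _ _ _ _
        have hxt : enumOf (pOrd g) S hS i' ≠ t := fun hc => htS (hc ▸ hxS)
        rw [h1] at hii'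
        exact (key _ hxS h2 hxt).mp hii'
    · by_cases h2 : enumOf (pOrd g) S hS i' = s
      · simp only [hq, h1, h2, if_false, if_true]
        have hxS : enumOf (pOrd g) S hS i ∈ S := enumOf_mem _ _ _ _
        have hxt : enumOf (pOrd g) S hS i ≠ t := fun hc => htS (hc ▸ hxS)
        rw [h2] at hii'
        exact (key' _ hxS h1 hxt).mp hii'
      · simpa [hq, h1, h2] using hii'
  have := @Finset.orderEmbOfFin_unique (Fin n) (pOrd g) T k hT q hmem hmono
  have happ : q j = @Finset.orderEmbOfFin (Fin n) (pOrd g) T k hT j := congrFun this j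
  have henum : enumOf (pOrd g) T hT j = @Finset.orderEmbOfFin (Fin n) (pOrd g) T k hT j :=
    @Finset.coe_orderIsoOfFin_apply (Fin n) (pOrd g) T k hT j
  rw [henum, ← happ]

end Path

section Main2

variable {n k : ℕ}

lemma rho_spec (g : Equiv.Perm (Fin n)) (s t : Fin n)
    (hab : ((g.symm s : Fin n) : ℤ) - ((g.symm t : Fin n) : ℤ) = 1 ∨
           ((g.symm t : Fin n) : ℤ) - ((g.symm s : Fin n) : ℤ) = 1)
    (S T : {S : Finset (Fin n) // S.card = k})
    (hs : s ∈ S.1) (ht : t ∈ T.1) (hst : s ≠ t) (htS : t ∉ S.1)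
    (hRE : S.1.erase s = T.1.erase t) :
    ∀ i, enumOf inferInstance T.1 T.2 ((tauOf g T.1 T.2 * (tauOf g S.1 S.2)⁻¹) i) =
      if enumOf inferInstance S.1 S.2 i = s then t else enumOf inferInstance S.1 S.2 i := by
  intro i
  have h1 : (tauOf g T.1 T.2 * (tauOf g S.1 S.2)⁻¹) i
      = tauOf g T.1 T.2 ((tauOf g S.1 S.2)⁻¹ i) := rfl
  have h2 : enumOf (pOrd g) S.1 S.2 ((tauOf g S.1 S.2)⁻¹ i)
      = enumOf inferInstance S.1 S.2 i := by
    rw [← tau_spec g S.1 S.2]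
    congr 1
    exact Equiv.apply_symm_apply _ _
  rw [h1, tau_spec g T.1 T.2,
    enum_replace g s t hab S.1 T.1 S.2 T.2 hs ht hst htS hRE, h2]

lemma term_struct (A : Matrix (Fin n) (Fin n) ℝ)
    (S T : {S : Finset (Fin n) // S.card = k}) (ρ : Equiv.Perm (Fin k)) (m : Fin k)
    (h2 : ∀ j ∈ Finset.univ.erase m, enumOf inferInstance S.1 S.2 j
        = enumOf inferInstance T.1 T.2 (ρ j)) :
    S.1.erase (enumOf inferInstance S.1 S.2 m) = T.1.erase (enumOf inferInstance T.1 T.2 (ρ m)) := by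
  ext x
  simp only [Finset.mem_erase]
  constructor
  · rintro ⟨hx1, hx2⟩
    obtain ⟨i, hi⟩ := enumOf_surj inferInstance S.1 S.2 hx2
    have him : i ≠ m := fun hc => hx1 (by rw [← hi, hc])
    have := h2 i (Finset.mem_erase.mpr ⟨him, Finset.mem_univ i⟩)
    refine ⟨fun hc => him ?_, by rw [← hi, this]; exact enumOf_mem _ _ _ _⟩
    apply ρ.injective
    apply enumOf_injective inferInstance T.1 T.2
    rw [← this, hi, hc]
  · rintro ⟨hx1, hx2⟩
    obtain ⟨i', hi'⟩ := enumOf_surj inferInstance T.1 T.2 hx2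
    set i := ρ.symm i' with hidef
    have hρi : ρ i = i' := ρ.apply_symm_apply i'
    have him : i ≠ m := by
      intro hc
      apply hx1
      rw [← hi', ← hρi, hc]
    have := h2 i (Finset.mem_erase.mpr ⟨him, Finset.mem_univ i⟩)
    refine ⟨fun hc => him ?_, by rw [← hi', ← hρi, ← this]; exact enumOf_mem _ _ _ _⟩
    apply enumOf_injective inferInstance S.1 S.2
    rw [this, hρi, hi', hc]

noncomputable def edgeW (A : Matrix (Fin n) (Fin n) ℝ) (g : Equiv.Perm (Fin n)) (a : ℕ) : ℝ :=
  if h : a + 1 < n then A (g ⟨a, Nat.lt_of_succ_lt h⟩) (g ⟨a + 1, h⟩) else 1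

noncomputable def dW (A : Matrix (Fin n) (Fin n) ℝ) (g : Equiv.Perm (Fin n))
    (S : {S : Finset (Fin n) // S.card = k}) : ℝ :=
  ((Equiv.Perm.sign (tauOf g S.1 S.2) : ℤ) : ℝ) *
    ∏ a ∈ Finset.range (n - 1),
      edgeW A g a ^ (S.1.filter (fun x => ((g.symm x : Fin n) : ℕ) ≤ a)).card

lemma pm_mul {x y : ℝ} (hx : x = 1 ∨ x = -1) (hy : y = 1 ∨ y = -1) :
    x * y = 1 ∨ x * y = -1 := by
  rcases hx with h | h <;> rcases hy with h' | h' <;> simp [h, h']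

lemma pm_pow {x : ℝ} (hx : x = 1 ∨ x = -1) (m : ℕ) : x ^ m = 1 ∨ x ^ m = -1 := by
  rcases hx with h | h
  · left; simp [h]
  · subst h; rcases Nat.even_or_odd m with he | ho
    · left; exact he.neg_one_pow
    · right; exact ho.neg_one_pow

lemma pm_pow_parity {x : ℝ} (hx : x = 1 ∨ x = -1) (m : ℕ) : x ^ m = x ^ (m % 2) := by
  rcases hx with h | h
  · simp [h]
  · subst h
    conv_lhs => rw [← Nat.div_add_mod m 2]
    rw [pow_add, pow_mul]
    norm_num

lemma sign_cast_pm (τ : Equiv.Perm (Fin k)) :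
    ((Equiv.Perm.sign τ : ℤ) : ℝ) = 1 ∨ ((Equiv.Perm.sign τ : ℤ) : ℝ) = -1 := by
  rcases Int.units_eq_one_or (Equiv.Perm.sign τ) with h | h <;> rw [h] <;> norm_num

end Main2

section Main3

variable {n k : ℕ}

lemma edgeW_pm (A : Matrix (Fin n) (Fin n) ℝ) (g : Equiv.Perm (Fin n))
    (hg : ∀ i j : Fin n, |A (g i) (g j)| = 1 ↔ ((i : ℤ) - j = 1 ∨ (j : ℤ) - i = 1))
    {a : ℕ} (ha : a ∈ Finset.range (n - 1)) : edgeW A g a = 1 ∨ edgeW A g a = -1 := by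
  have h1 : a + 1 < n := by have := Finset.mem_range.mp ha; omega
  have h0 : a < n := Nat.lt_of_succ_lt h1
  have habs : |A (g ⟨a, h0⟩) (g ⟨a + 1, h1⟩)| = 1 := by
    refine (hg ⟨a, h0⟩ ⟨a + 1, h1⟩).mpr (Or.inr ?_)
    show ((a + 1 : ℕ) : ℤ) - ((a : ℕ) : ℤ) = 1
    push_cast; ring
  unfold edgeW
  rw [dif_pos h1]
  exact (abs_eq (by norm_num)).mp habs

lemma prefix_prod (A : Matrix (Fin n) (Fin n) ℝ) (g : Equiv.Perm (Fin n))
    (hg : ∀ i j : Fin n, |A (g i) (g j)| = 1 ↔ ((i : ℤ) - j = 1 ∨ (j : ℤ) - i = 1))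
    (s t : Fin n)
    (hadjst : ((g.symm s : Fin n) : ℤ) - ((g.symm t : Fin n) : ℤ) = 1 ∨
              ((g.symm t : Fin n) : ℤ) - ((g.symm s : Fin n) : ℤ) = 1)
    (hAts : A t s = A s t)
    (S T : Finset (Fin n)) (hs : s ∈ S) (ht : t ∈ T)
    (hRE : S.erase s = T.erase t) :
    (∏ a ∈ Finset.range (n - 1),
        edgeW A g a ^ (S.filter (fun x => ((g.symm x : Fin n) : ℕ) ≤ a)).card) *
    (∏ a ∈ Finset.range (n - 1),
        edgeW A g a ^ (T.filter (fun x => ((g.symm x : Fin n) : ℕ) ≤ a)).card) = A s t := by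
  set pa := ((g.symm s : Fin n) : ℕ) with hpadef
  set pb := ((g.symm t : Fin n) : ℕ) with hpbdef
  have hab : pa = pb + 1 ∨ pb = pa + 1 := by
    rcases hadjst with h | h
    · left
      have h1 : ((pa : ℕ) : ℤ) - ((pb : ℕ) : ℤ) = 1 := h
      omega
    · right
      have h1 : ((pb : ℕ) : ℤ) - ((pa : ℕ) : ℤ) = 1 := h
      omega
  have hpan : pa < n := (g.symm s).isLt
  have hpbn : pb < n := (g.symm t).isLt
  set c := min pa pb with hcdef
  have hcr : c ∈ Finset.range (n - 1) := by
    rw [Finset.mem_range]; omega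
  have hSsplit : ∀ a : ℕ, (S.filter (fun x => ((g.symm x : Fin n) : ℕ) ≤ a)).card
      = ((S.erase s).filter (fun x => ((g.symm x : Fin n) : ℕ) ≤ a)).card
        + (if pa ≤ a then 1 else 0) := by
    intro a
    conv_lhs => rw [← Finset.insert_erase hs]
    rw [Finset.filter_insert]
    by_cases hcond : pa ≤ a
    · rw [if_pos hcond, if_pos hcond,
        Finset.card_insert_of_notMem
          (fun hmem => (Finset.mem_erase.mp (Finset.mem_filter.mp hmem).1).1 rfl)]
    · rw [if_neg hcond, if_neg hcond, add_zero]
  have hTsplit : ∀ a : ℕ, (T.filter (fun x => ((g.symm x : Fin n) : ℕ) ≤ a)).card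
      = ((S.erase s).filter (fun x => ((g.symm x : Fin n) : ℕ) ≤ a)).card
        + (if pb ≤ a then 1 else 0) := by
    intro a
    conv_lhs => rw [← Finset.insert_erase ht]
    rw [Finset.filter_insert, hRE]
    by_cases hcond : pb ≤ a
    · rw [if_pos hcond, if_pos hcond,
        Finset.card_insert_of_notMem
          (fun hmem => (Finset.mem_erase.mp (Finset.mem_filter.mp hmem).1).1 rfl)]
    · rw [if_neg hcond, if_neg hcond, add_zero]
  rw [← Finset.prod_mul_distrib]
  have hmain : ∀ a ∈ Finset.range (n - 1),
      edgeW A g a ^ (S.filter (fun x => ((g.symm x : Fin n) : ℕ) ≤ a)).card *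
      edgeW A g a ^ (T.filter (fun x => ((g.symm x : Fin n) : ℕ) ≤ a)).card
        = if a = c then A s t else 1 := by
    intro a ha
    have hepm := edgeW_pm A g hg ha
    have han : a + 1 < n := by have := Finset.mem_range.mp ha; omega
    rw [← pow_add, hSsplit a, hTsplit a]
    set C := ((S.erase s).filter (fun x => ((g.symm x : Fin n) : ℕ) ≤ a)).card
    rw [pm_pow_parity hepm]
    by_cases h1 : pa ≤ a <;> by_cases h2 : pb ≤ a
    · -- both
      have hmod : (C + (if pa ≤ a then 1 else 0) + (C + (if pb ≤ a then 1 else 0))) % 2 = 0 := by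
        rw [if_pos h1, if_pos h2]; omega
      rw [hmod, pow_zero, if_neg (by omega)]
    · -- pa ≤ a < pb : pb = pa + 1, a = pa = c
      have hc : a = c := by omega
      have hba : pb = pa + 1 := by omega
      have hmod : (C + (if pa ≤ a then 1 else 0) + (C + (if pb ≤ a then 1 else 0))) % 2 = 1 := by
        rw [if_pos h1, if_neg h2]; omega
      rw [hmod, pow_one, if_pos hc]
      have ha' : a = pa := by omega
      subst ha'
      unfold edgeW
      rw [dif_pos han]
      have e1 : (⟨pa, Nat.lt_of_succ_lt han⟩ : Fin n) = g.symm s := by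
        apply Fin.ext; simp [hpadef]
      have e2 : (⟨pa + 1, han⟩ : Fin n) = g.symm t := by
        apply Fin.ext; simp [hpbdef]; omega
      rw [e1, e2, Equiv.apply_symm_apply, Equiv.apply_symm_apply]
    · -- pb ≤ a < pa : pa = pb + 1, a = pb = c
      have hc : a = c := by omega
      have hba : pa = pb + 1 := by omega
      have hmod : (C + (if pa ≤ a then 1 else 0) + (C + (if pb ≤ a then 1 else 0))) % 2 = 1 := by
        rw [if_neg h1, if_pos h2]; omega
      rw [hmod, pow_one, if_pos hc]
      have ha' : a = pb := by omega
      subst ha'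
      unfold edgeW
      rw [dif_pos han]
      have e1 : (⟨pb, Nat.lt_of_succ_lt han⟩ : Fin n) = g.symm t := by
        apply Fin.ext; simp [hpbdef]
      have e2 : (⟨pb + 1, han⟩ : Fin n) = g.symm s := by
        apply Fin.ext; simp [hpadef]; omega
      rw [e1, e2, Equiv.apply_symm_apply, Equiv.apply_symm_apply]
      exact hAts
    · -- neither
      have hmod : (C + (if pa ≤ a then 1 else 0) + (C + (if pb ≤ a then 1 else 0))) % 2 = 0 := by
        rw [if_neg h1, if_neg h2]; omega
      rw [hmod, pow_zero, if_neg (by omega)]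
  rw [Finset.prod_congr rfl hmain,
    Finset.prod_ite_eq' (Finset.range (n - 1)) c (fun _ => A s t), if_pos hcr]

end Main3

theorem stmt18 {n k : ℕ} (hn : 2 ≤ n)
    (A : Matrix (Fin n) (Fin n) ℝ) (hA : IsSignedMatrix A)
    (hpath : IsPathMatrix A) (hk : 1 ≤ k) (hkn : k ≤ n - 1) :
    IsBalancedMatrix (extPow A k) := by
  obtain ⟨g, hg⟩ := hpath
  obtain ⟨hsymm, hdiag, hentries⟩ := hA
  have hApm : ∀ s t : Fin n, A s t ≠ 0 → (A s t = 1 ∨ A s t = -1) := by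
    intro s t h
    rcases hentries s t with h' | h' | h'
    · exact Or.inr h'
    · exact absurd h' h
    · exact Or.inl h'
  have hAsymm : ∀ s t : Fin n, A s t = A t s := by
    intro s t
    have := congrFun (congrFun hsymm s) t
    simpa [Matrix.transpose_apply] using this.symm
  have hadj : ∀ s t : Fin n, A s t ≠ 0 →
      (((g.symm s : Fin n) : ℤ) - ((g.symm t : Fin n) : ℤ) = 1 ∨
       ((g.symm t : Fin n) : ℤ) - ((g.symm s : Fin n) : ℤ) = 1) := by
    intro s t h
    have habs : |A s t| = 1 := by
      rcases hApm s t h with h' | h' <;> rw [h'] <;> norm_num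
    have := (hg (g.symm s) (g.symm t)).mp (by
      rwa [Equiv.apply_symm_apply, Equiv.apply_symm_apply])
    exact this
  refine ⟨Matrix.diagonal (dW A g), Matrix.isDiag_diagonal _, ?_, ?_⟩
  · intro S
    rw [Matrix.diagonal_apply_eq]
    unfold dW
    refine pm_mul (sign_cast_pm _) ?_
    refine Finset.prod_induction _ (fun x => x = 1 ∨ x = -1) (fun _ _ => pm_mul)
      (Or.inl rfl) ?_
    intro a ha
    exact pm_pow (edgeW_pm A g hg ha) _
  · ext S T
    simp only [Matrix.mul_diagonal, Matrix.diagonal_mul, Matrix.of_apply]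
    show dW A g S * extPow A k S T * dW A g T = |extPow A k S T|
    by_cases hC : ∃ st : Fin n × Fin n, st.1 ∈ S.1 ∧ st.2 ∈ T.1 ∧ A st.1 st.2 ≠ 0 ∧
        S.1.erase st.1 = T.1.erase st.2
    · obtain ⟨⟨s, t⟩, hs, ht, hAst, hRE⟩ := hC
      have hst : s ≠ t := fun hc => hAst (by rw [hc]; exact hdiag t)
      have htS : t ∉ S.1 := by
        intro hc
        have h' : t ∈ S.1.erase s := Finset.mem_erase.mpr ⟨fun h => hst h.symm, hc⟩
        rw [hRE] at h'
        exact (Finset.mem_erase.mp h').1 rfl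
      obtain ⟨m, hm⟩ := enumOf_surj inferInstance S.1 S.2 hs
      set ρ₀ : Equiv.Perm (Fin k) := tauOf g T.1 T.2 * (tauOf g S.1 S.2)⁻¹ with hρ₀def
      have hρ₀ := rho_spec g s t (hadj s t hAst) S T hs ht hst htS hRE
      have hval : extPow A k S T = ((Equiv.Perm.sign ρ₀ : ℤ) : ℝ) * A s t := by
        rw [extPow_apply]
        have e1 : ∀ ρ : Equiv.Perm (Fin k), ρ ≠ ρ₀ → (∑ m' : Fin k,
            ((Equiv.Perm.sign ρ : ℤ) : ℝ) *
              A (enumOf inferInstance S.1 S.2 m') (enumOf inferInstance T.1 T.2 (ρ m')) *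
              ∏ j ∈ Finset.univ.erase m',
                (if enumOf inferInstance S.1 S.2 j = enumOf inferInstance T.1 T.2 (ρ j)
                  then (1:ℝ) else 0)) = 0 := by
          intro ρ hρ
          apply Finset.sum_eq_zero
          intro m' _
          by_cases h1 : A (enumOf inferInstance S.1 S.2 m') (enumOf inferInstance T.1 T.2 (ρ m')) = 0
          · rw [h1]; ring
          by_cases h2 : ∀ j ∈ Finset.univ.erase m',
              enumOf inferInstance S.1 S.2 j = enumOf inferInstance T.1 T.2 (ρ j)
          · exfalso
            apply hρ
            have hRE' := term_struct A S T ρ m' h2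
            have hnd : enumOf inferInstance S.1 S.2 m' ≠ enumOf inferInstance T.1 T.2 (ρ m') :=
              fun hc => h1 (by rw [hc]; exact hdiag _)
            have hs'' : enumOf inferInstance S.1 S.2 m' = s := by
              by_contra hne
              have h3 : enumOf inferInstance S.1 S.2 m' ∈ T.1 := by
                have h4 : enumOf inferInstance S.1 S.2 m' ∈ S.1.erase s :=
                  Finset.mem_erase.mpr ⟨hne, enumOf_mem _ _ _ _⟩
                rw [hRE] at h4
                exact Finset.mem_of_mem_erase h4
              have h5 : enumOf inferInstance S.1 S.2 m'
                  ∈ T.1.erase (enumOf inferInstance T.1 T.2 (ρ m')) :=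
                Finset.mem_erase.mpr ⟨hnd, h3⟩
              rw [← hRE'] at h5
              exact (Finset.mem_erase.mp h5).1 rfl
            have hm'm : m' = m :=
              enumOf_injective inferInstance S.1 S.2 (by rw [hs'', hm])
            have ht'' : enumOf inferInstance T.1 T.2 (ρ m') = t := by
              by_contra hne
              have h3 : enumOf inferInstance T.1 T.2 (ρ m') ∈ S.1 := by
                have h4 : enumOf inferInstance T.1 T.2 (ρ m') ∈ T.1.erase t :=
                  Finset.mem_erase.mpr ⟨hne, enumOf_mem _ _ _ _⟩
                rw [← hRE] at h4
                exact Finset.mem_of_mem_erase h4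
              have h5 : enumOf inferInstance T.1 T.2 (ρ m')
                  ∈ S.1.erase (enumOf inferInstance S.1 S.2 m') :=
                Finset.mem_erase.mpr ⟨fun hc => hnd hc.symm, h3⟩
              rw [hRE'] at h5
              exact (Finset.mem_erase.mp h5).1 rfl
            refine Equiv.ext fun j => ?_
            apply enumOf_injective inferInstance T.1 T.2
            by_cases hj : j = m'
            · subst hj
              rw [ht'', hρ₀ j, if_pos hs'']
            · have h6 := h2 j (Finset.mem_erase.mpr ⟨hj, Finset.mem_univ j⟩)
              have h7 : enumOf inferInstance S.1 S.2 j ≠ s := by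
                intro hc
                apply hj
                rw [hm'm]
                exact enumOf_injective inferInstance S.1 S.2 (by rw [hc, hm])
              rw [← h6, hρ₀ j, if_neg h7]
          · push_neg at h2
            obtain ⟨j, hj, hne⟩ := h2
            rw [Finset.prod_eq_zero hj (show (if enumOf inferInstance S.1 S.2 j
              = enumOf inferInstance T.1 T.2 (ρ j) then (1:ℝ) else 0) = 0 from if_neg hne)]
            ring
        rw [Finset.sum_eq_single ρ₀ (fun ρ _ hρ => e1 ρ hρ)
          (fun h => absurd (Finset.mem_univ ρ₀) h)]
        have e2 : ∀ m' : Fin k, m' ≠ m →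
            ((Equiv.Perm.sign ρ₀ : ℤ) : ℝ) *
              A (enumOf inferInstance S.1 S.2 m') (enumOf inferInstance T.1 T.2 (ρ₀ m')) *
              ∏ j ∈ Finset.univ.erase m',
                (if enumOf inferInstance S.1 S.2 j = enumOf inferInstance T.1 T.2 (ρ₀ j)
                  then (1:ℝ) else 0) = 0 := by
          intro m' hm'
          have hfac : (if enumOf inferInstance S.1 S.2 m = enumOf inferInstance T.1 T.2 (ρ₀ m)
              then (1:ℝ) else 0) = 0 := by
            rw [if_neg]
            rw [hρ₀ m, hm, if_pos rfl]
            exact hst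
          rw [Finset.prod_eq_zero
            (Finset.mem_erase.mpr ⟨fun hc => hm' hc.symm, Finset.mem_univ m⟩) hfac]
          ring
        rw [Finset.sum_eq_single m (fun m' _ hm' => e2 m' hm')
          (fun h => absurd (Finset.mem_univ m) h)]
        have hprod : (∏ j ∈ Finset.univ.erase m,
            (if enumOf inferInstance S.1 S.2 j = enumOf inferInstance T.1 T.2 (ρ₀ j)
              then (1:ℝ) else 0)) = 1 := by
          apply Finset.prod_eq_one
          intro j hj
          have hjm : j ≠ m := (Finset.mem_erase.mp hj).1
          have hne : enumOf inferInstance S.1 S.2 j ≠ s := by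
            intro hc
            exact hjm (enumOf_injective inferInstance S.1 S.2 (by rw [hc, hm]))
          rw [hρ₀ j, if_neg hne, if_pos rfl]
        rw [hprod, mul_one, hm, hρ₀ m, hm, if_pos rfl]
      -- final numeric computation
      have hPP := prefix_prod A g hg s t (hadj s t hAst) (hAsymm t s) S.1 T.1 hs ht hRE
      rw [hval]
      unfold dW
      have hsρ : ((Equiv.Perm.sign ρ₀ : ℤ) : ℝ)
          = ((Equiv.Perm.sign (tauOf g T.1 T.2) : ℤ) : ℝ) *
            ((Equiv.Perm.sign (tauOf g S.1 S.2) : ℤ) : ℝ) := by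
        rw [hρ₀def, Equiv.Perm.sign_mul, Equiv.Perm.sign_inv]
        push_cast
        ring
      rw [hsρ]
      set xS := ((Equiv.Perm.sign (tauOf g S.1 S.2) : ℤ) : ℝ) with hxSdef
      set xT := ((Equiv.Perm.sign (tauOf g T.1 T.2) : ℤ) : ℝ) with hxTdef
      set PS := ∏ a ∈ Finset.range (n - 1),
        edgeW A g a ^ (S.1.filter (fun x => ((g.symm x : Fin n) : ℕ) ≤ a)).card with hPSdef
      set PT := ∏ a ∈ Finset.range (n - 1),
        edgeW A g a ^ (T.1.filter (fun x => ((g.symm x : Fin n) : ℕ) ≤ a)).card with hPTdef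
      have hxS2 : xS * xS = 1 := by
        rcases sign_cast_pm (tauOf g S.1 S.2) with h | h <;> rw [hxSdef, h] <;> norm_num
      have hxT2 : xT * xT = 1 := by
        rcases sign_cast_pm (tauOf g T.1 T.2) with h | h <;> rw [hxTdef, h] <;> norm_num
      have hA2 : A s t * A s t = 1 := by
        rcases hApm s t hAst with h | h <;> rw [h] <;> norm_num
      have habs : |xT * xS * A s t| = 1 := by
        rw [abs_mul, abs_mul]
        have e3 : |xT| = 1 := by
          rcases sign_cast_pm (tauOf g T.1 T.2) with h | h <;> rw [hxTdef, h] <;> norm_num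
        have e4 : |xS| = 1 := by
          rcases sign_cast_pm (tauOf g S.1 S.2) with h | h <;> rw [hxSdef, h] <;> norm_num
        have e5 : |A s t| = 1 := by
          rcases hApm s t hAst with h | h <;> rw [h] <;> norm_num
        rw [e3, e4, e5]; norm_num
      calc (xS * PS) * ((xT * xS) * A s t) * (xT * PT)
          = (xS * xS) * (xT * xT) * ((PS * PT) * A s t) := by ring
        _ = (PS * PT) * A s t := by rw [hxS2, hxT2]; ring
        _ = A s t * A s t := by rw [hPP]
        _ = 1 := hA2
        _ = |xT * xS * A s t| := habs.symm
    · have hval : extPow A k S T = 0 := by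
        rw [extPow_apply]
        apply Finset.sum_eq_zero
        intro ρ _
        apply Finset.sum_eq_zero
        intro m _
        by_cases h1 : A (enumOf inferInstance S.1 S.2 m) (enumOf inferInstance T.1 T.2 (ρ m)) = 0
        · rw [h1]; ring
        by_cases h2 : ∀ j ∈ Finset.univ.erase m,
            enumOf inferInstance S.1 S.2 j = enumOf inferInstance T.1 T.2 (ρ j)
        · exact absurd ⟨(enumOf inferInstance S.1 S.2 m, enumOf inferInstance T.1 T.2 (ρ m)),
            enumOf_mem inferInstance S.1 S.2 m, enumOf_mem inferInstance T.1 T.2 (ρ m),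
            h1, term_struct A S T ρ m h2⟩ hC
        · push_neg at h2
          obtain ⟨j, hj, hne⟩ := h2
          rw [Finset.prod_eq_zero hj (show (if enumOf inferInstance S.1 S.2 j
            = enumOf inferInstance T.1 T.2 (ρ j) then (1:ℝ) else 0) = 0 from if_neg hne)]
          ring
      rw [hval]
      simp
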